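/- arXiv:1909.11837 — 6 statements merged into one kernel-verified Lean document; each statement's English description precedes it below -/
import Mathlib

section
/- For a matrix M ∈ ℝ^{m×n} with m ≥ n, let l(M) denote the leave-one-out distance of its columns, defined as the minimum over i of the distance from the i-th column to the span of the remaining columns. Then l(M)/√n ≤ σ_min(M) ≤ l(M), where σ_min(M) is the smallest singular value of M. -/
open Finset in
/-- Leave-one-out distance vs smallest singular value:
`l(M)/√n ≤ σ_min(M) ≤ l(M)` for `M ∈ ℝ^{m×n}`, `m ≥ n`.
The leave-one-out distance `min_i inf_a ‖v_i - ∑_{j≠i} a_j v_j‖` is expressed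
as the infimum of `‖M c‖` over coefficient vectors `c` having some coordinate
equal to `1`. -/
theorem stmt_0 (m n : ℕ) (hn : 0 < n) (hmn : n ≤ m)
    (M : Matrix (Fin m) (Fin n) ℝ)
    (enorm : ∀ {k : ℕ}, (Fin k → ℝ) → ℝ)
    (henorm : ∀ {k : ℕ} (v : Fin k → ℝ), enorm v = Real.sqrt (∑ i, v i ^ 2))
    (l σmin : ℝ)
    (hl : IsGLB {r : ℝ | ∃ c : Fin n → ℝ, (∃ i, c i = 1) ∧ r = enorm (M.mulVec c)} l)
    (hσ : IsGLB {r : ℝ | ∃ x : Fin n → ℝ, x ≠ 0 ∧ r = enorm (M.mulVec x) / enorm x} σmin) :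
    l / Real.sqrt n ≤ σmin ∧ σmin ≤ l := by
  have hpos : ∀ {k : ℕ} (v : Fin k → ℝ), 0 ≤ enorm v := by
    intro k v; rw [henorm]; positivity
  have hsmul : ∀ {k : ℕ} (a : ℝ) (v : Fin k → ℝ), enorm (a • v) = |a| * enorm v := by
    intro k a v
    rw [henorm, henorm, ← Real.sqrt_sq_eq_abs, ← Real.sqrt_mul (sq_nonneg a),
      Finset.mul_sum]
    congr 1
    apply Finset.sum_congr rfl
    intro j _
    simp [Pi.smul_apply, mul_pow]
  have hone : ∀ (c : Fin n → ℝ) (i : Fin n), c i = 1 → 1 ≤ enorm c := by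
    intro c i hci
    rw [henorm]
    have h1 : (1 : ℝ) = Real.sqrt (c i ^ 2) := by rw [hci]; simp
    rw [h1]
    apply Real.sqrt_le_sqrt
    exact Finset.single_le_sum (fun j _ => sq_nonneg (c j)) (Finset.mem_univ i)
  have hnz : ∀ (x : Fin n → ℝ), x ≠ 0 → 0 < enorm x := by
    intro x hx
    obtain ⟨j, hj⟩ := Function.ne_iff.mp hx
    rw [henorm]
    apply Real.sqrt_pos.mpr
    have hj' : x j ≠ 0 := by simpa using hj
    have : 0 < x j ^ 2 := by positivity
    exact lt_of_lt_of_le this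
      (Finset.single_le_sum (fun i _ => sq_nonneg (x i)) (Finset.mem_univ j))
  constructor
  · -- l / √n ≤ σmin
    apply hσ.2
    rintro r ⟨x, hx, rfl⟩
    haveI : Nonempty (Fin n) := ⟨⟨0, hn⟩⟩
    obtain ⟨i, hi⟩ := Finite.exists_max (fun j => |x j|)
    have hxi : x i ≠ 0 := by
      intro h
      apply hx
      funext j
      have := hi j
      rw [h, abs_zero] at this
      simpa using le_antisymm this (abs_nonneg _)
    -- the rescaled vector
    set c : Fin n → ℝ := (x i)⁻¹ • x with hc
    have hci : c i = 1 := by simp [hc, inv_mul_cancel₀ hxi]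
    have hlc : l ≤ enorm (M.mulVec c) := hl.1 ⟨c, ⟨i, hci⟩, rfl⟩
    have hMc : enorm (M.mulVec c) = |x i|⁻¹ * enorm (M.mulVec x) := by
      rw [hc, Matrix.mulVec_smul, hsmul, abs_inv]
    have hxle : enorm x ≤ Real.sqrt n * |x i| := by
      rw [henorm]
      have : ∑ j, x j ^ 2 ≤ ∑ _j : Fin n, x i ^ 2 := by
        apply Finset.sum_le_sum
        intro j _
        rw [← sq_abs (x j), ← sq_abs (x i)]
        exact pow_le_pow_left₀ (abs_nonneg _) (hi j) 2
      calc Real.sqrt (∑ j, x j ^ 2) ≤ Real.sqrt (∑ _j : Fin n, x i ^ 2) :=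
            Real.sqrt_le_sqrt this
        _ = Real.sqrt (n * x i ^ 2) := by simp [Finset.sum_const, mul_comm]
        _ = Real.sqrt n * |x i| := by
            rw [Real.sqrt_mul (Nat.cast_nonneg n), Real.sqrt_sq_eq_abs]
    have hxipos : 0 < |x i| := abs_pos.mpr hxi
    have hsn : 0 < Real.sqrt n := Real.sqrt_pos.mpr (by exact_mod_cast hn)
    have hxpos : 0 < enorm x := hnz x hx
    have step1 : enorm (M.mulVec x) / (Real.sqrt n * |x i|) ≤
        enorm (M.mulVec x) / enorm x :=
      div_le_div_of_nonneg_left (hpos _) hxpos hxle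
    have step2 : l / Real.sqrt n ≤ enorm (M.mulVec x) / (Real.sqrt n * |x i|) := by
      rw [div_le_div_iff₀ hsn (by positivity)]
      have : l * |x i| ≤ enorm (M.mulVec x) := by
        have := hlc
        rw [hMc] at this
        calc l * |x i| ≤ |x i|⁻¹ * enorm (M.mulVec x) * |x i| := by
              exact mul_le_mul_of_nonneg_right this (abs_nonneg _)
          _ = enorm (M.mulVec x) := by field_simp
      calc l * (Real.sqrt n * |x i|) = l * |x i| * Real.sqrt n := by ring
        _ ≤ enorm (M.mulVec x) * Real.sqrt n :=
            mul_le_mul_of_nonneg_right this hsn.le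
    exact step2.trans step1
  · -- σmin ≤ l
    apply hl.2
    rintro r ⟨c, ⟨i, hci⟩, rfl⟩
    have hc0 : c ≠ 0 := by
      intro h
      rw [h] at hci
      simpa using hci
    have : σmin ≤ enorm (M.mulVec c) / enorm c := hσ.1 ⟨c, hc0, rfl⟩
    refine this.trans ?_
    exact div_le_self (hpos _) (hone c i hci)
end

section
/- Let x be a symmetric tensor of order p on ℝ^d. Then ‖x‖_rv ≥ ‖x‖_2 / √(p!), where ‖x‖_rv is the Euclidean norm of the reduced vectorized form of x (the vector of coefficients of x in the basis of symmetrized standard basis tensors). -/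
/-!
Basis tensors `s_i` with distinct multi-indices have disjoint supports: an entry `f` lies in the
support of `s_i` only if the value counts of `f` are `i`. Hence `‖x‖₂² = ∑ᵢ cᵢ² ‖sᵢ‖₂²`. The
permutations `σ` with `j ∘ σ = f` form a coset of the stabilizer of `j`, of order `∏ₘ iₘ!`, so each
entry of `s_i` lies in `[0, 1]`; its entries sum to `p! / ∏ₘ iₘ! ≤ p!`, whence `‖sᵢ‖₂² ≤ p!`.
-/

open Finset

/-- The symmetrized basis tensor `s_i = (1/∏_m i_m!) ∑_{σ ∈ S_p} e_{j_{σ(1)}} ⊗ ⋯ ⊗ e_{j_{σ(p)}}`,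
where `j : Fin p → Fin d` is a string containing each value `m` exactly `i m` times.
A tensor of order `p` on `ℝ^d` is represented as a function `(Fin p → Fin d) → ℝ`;
the entry of `s_i` at position `f` is `(1/∏_m i_m!) · #{σ | ∀ k, j (σ k) = f k}`. -/
noncomputable def sBasis (d p : ℕ) (i : Fin d → ℕ) (j : Fin p → Fin d) :
    (Fin p → Fin d) → ℝ := fun f =>
  (∏ m, ((i m).factorial : ℝ))⁻¹ *
    ((Finset.univ.filter (fun σ : Equiv.Perm (Fin p) => ∀ k, j (σ k) = f k)).card : ℝ)

open Nat

section PermMatchCount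

variable {ι α : Type*} [Fintype ι] [DecidableEq α]

lemma card_fiber_comp_perm (g : ι → α) (σ : Equiv.Perm ι) (m : α) :
    #{k | g (σ k) = m} = #{k | g k = m} :=
  card_equiv σ (by simp)

variable [DecidableEq ι]

def permMatchCount (g f : ι → α) : ℕ := #{σ : Equiv.Perm ι | ∀ k, g (σ k) = f k}

lemma card_fiber_eq_of_permMatchCount_ne_zero {g f : ι → α} (h : permMatchCount g f ≠ 0)
    (m : α) : #{k | g k = m} = #{k | f k = m} := by
  obtain ⟨σ, hσ⟩ := card_ne_zero.mp h
  simp only [mem_filter, mem_univ, true_and] at hσ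
  simp only [← card_fiber_comp_perm g σ m, hσ]

variable [Fintype α]

lemma permMatchCount_le (g f : ι → α) :
    permMatchCount g f ≤ ∏ m, (#{k | g k = m})! := by
  rcases Nat.eq_zero_or_pos (permMatchCount g f) with h | h
  · exact h ▸ Nat.zero_le _
  obtain ⟨σ₀, hσ₀⟩ := card_pos.mp h
  simp only [mem_filter, mem_univ, true_and] at hσ₀
  have hcoset : permMatchCount g f = Fintype.card {τ : Equiv.Perm ι // g ∘ τ = g} := by
    rw [permMatchCount, ← Fintype.card_subtype]
    refine Fintype.card_congr ((Equiv.mulRight σ₀⁻¹).subtypeEquiv fun σ => ?_)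
    simp only [Equiv.coe_mulRight, funext_iff, Function.comp_apply, Equiv.Perm.coe_mul,
      ← hσ₀]
    exact ⟨fun H x => by simpa using H (σ₀⁻¹ x), fun H k => by simpa using H (σ₀ k)⟩
  rw [hcoset, DomMulAct.stabilizer_card]
  simp only [Fintype.card_subtype, le_refl]

lemma sum_permMatchCount (g : ι → α) :
    ∑ f, permMatchCount g f = (Fintype.card ι)! := by
  rw [← Fintype.card_perm, ← Finset.card_univ, card_eq_sum_card_fiberwise
    (f := fun σ : Equiv.Perm ι => g ∘ σ) (t := univ) fun _ _ => mem_univ _]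
  refine sum_congr rfl fun f _ => ?_
  simp only [permMatchCount, funext_iff, Function.comp_apply]

end PermMatchCount

lemma Finset.sq_sum_eq_sum_sq_of_mul_eq_zero {β R : Type*} [CommSemiring R] {s : Finset β}
    {a : β → R} (h : ∀ i ∈ s, ∀ j ∈ s, i ≠ j → a i * a j = 0) :
    (∑ i ∈ s, a i) ^ 2 = ∑ i ∈ s, a i ^ 2 := by
  rw [sq, sum_mul_sum]
  refine sum_congr rfl fun i hi => ?_
  rw [sum_eq_single_of_mem i hi fun j hj hji => h i hi j hj hji.symm, sq]

section SymmetrizedBasis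

variable {d p : ℕ}

lemma sBasis_apply (i : Fin d → ℕ) (g f : Fin p → Fin d) :
    sBasis d p i g f = (∏ m, ((i m)! : ℝ))⁻¹ * permMatchCount g f := by
  -- not `rfl`: `sBasis` decides `∀ k` with the instance specific to `Fin`
  unfold sBasis permMatchCount
  congr

lemma sBasis_nonneg (i : Fin d → ℕ) (g f : Fin p → Fin d) : 0 ≤ sBasis d p i g f := by
  rw [sBasis_apply]
  positivity

lemma sBasis_le_one {i : Fin d → ℕ} {g : Fin p → Fin d} (hg : ∀ m, #{k | g k = m} = i m)
    (f : Fin p → Fin d) : sBasis d p i g f ≤ 1 := by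
  rw [sBasis_apply, inv_mul_le_one₀ (by positivity)]
  have hle := permMatchCount_le g f
  simp only [hg] at hle
  exact_mod_cast hle

lemma sum_sBasis_le_factorial (i : Fin d → ℕ) (g : Fin p → Fin d) :
    ∑ f, sBasis d p i g f ≤ p ! := by
  simp_rw [sBasis_apply, ← mul_sum, ← Nat.cast_sum, sum_permMatchCount, Fintype.card_fin]
  refine mul_le_of_le_one_left (by positivity) (inv_le_one_of_one_le₀ ?_)
  exact_mod_cast one_le_prod' fun m _ => (i m).factorial_pos

lemma sum_sBasis_sq_le_factorial {i : Fin d → ℕ} {g : Fin p → Fin d}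
    (hg : ∀ m, #{k | g k = m} = i m) : ∑ f, sBasis d p i g f ^ 2 ≤ p ! := by
  refine (sum_le_sum fun f _ => ?_).trans (sum_sBasis_le_factorial i g)
  nlinarith [sBasis_nonneg i g f, sBasis_le_one hg f]

lemma sBasis_mul_sBasis_eq_zero {i i' : Fin d → ℕ} {g g' : Fin p → Fin d}
    (hg : ∀ m, #{k | g k = m} = i m) (hg' : ∀ m, #{k | g' k = m} = i' m) (hne : i ≠ i')
    (f : Fin p → Fin d) : sBasis d p i g f * sBasis d p i' g' f = 0 := by
  by_contra h
  obtain ⟨h1, h2⟩ := mul_ne_zero_iff.mp h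
  have hc1 : permMatchCount g f ≠ 0 := fun h0 => h1 (by simp [sBasis_apply, h0])
  have hc2 : permMatchCount g' f ≠ 0 := fun h0 => h2 (by simp [sBasis_apply, h0])
  exact hne (funext fun m => by rw [← hg, ← hg', card_fiber_eq_of_permMatchCount_ne_zero hc1,
    card_fiber_eq_of_permMatchCount_ne_zero hc2])

end SymmetrizedBasis

theorem stmt_1_general (d p : ℕ) (I : Finset (Fin d → ℕ))
    (j : (Fin d → ℕ) → (Fin p → Fin d))
    (hj : ∀ i ∈ I, ∀ m, (Finset.univ.filter (fun k => j i k = m)).card = i m)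
    (c : (Fin d → ℕ) → ℝ) (x : (Fin p → Fin d) → ℝ)
    (hx : x = ∑ i ∈ I, c i • sBasis d p i (j i)) :
    Real.sqrt (∑ f : Fin p → Fin d, x f ^ 2) / Real.sqrt (p.factorial) ≤
      Real.sqrt (∑ i ∈ I, c i ^ 2) := by
  have hx_sq : ∀ f, x f ^ 2 = ∑ i ∈ I, c i ^ 2 * sBasis d p i (j i) f ^ 2 := fun f => by
    rw [hx, Finset.sum_apply, sq_sum_eq_sum_sq_of_mul_eq_zero fun i hi i' hi' hne => ?_]
    · simp only [Pi.smul_apply, smul_eq_mul, mul_pow]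
    · simp only [Pi.smul_apply, smul_eq_mul, mul_mul_mul_comm,
        sBasis_mul_sBasis_eq_zero (hj i hi) (hj i' hi') hne, mul_zero]
  have hnorm_sq : ∑ f, x f ^ 2 ≤ ∑ i ∈ I, c i ^ 2 * p ! := calc
    ∑ f, x f ^ 2 = ∑ i ∈ I, c i ^ 2 * ∑ f, sBasis d p i (j i) f ^ 2 := by
      simp_rw [hx_sq, mul_sum]
      exact sum_comm
    _ ≤ ∑ i ∈ I, c i ^ 2 * p ! := sum_le_sum fun i hi =>
      mul_le_mul_of_nonneg_left (sum_sBasis_sq_le_factorial (hj i hi)) (sq_nonneg _)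
  rw [← sum_mul] at hnorm_sq
  rw [← Real.sqrt_div' _ (by positivity)]
  exact Real.sqrt_le_sqrt (div_le_of_le_mul₀ (by positivity) (by positivity) hnorm_sq)

/-- For a symmetric tensor `x = ∑_i c_i s_i` expanded in the symmetrized basis,
`‖x‖_rv ≥ ‖x‖₂ / √(p!)`, where `‖x‖_rv = √(∑_i c_i²)` and `‖x‖₂` is the Euclidean
norm of `x` as an element of `ℝ^{d^p}`. -/
theorem stmt_1 (d p : ℕ) (I : Finset (Fin d → ℕ))
    (hI : ∀ i ∈ I, ∑ m, i m = p)
    (j : (Fin d → ℕ) → (Fin p → Fin d))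
    (hj : ∀ i ∈ I, ∀ m, (Finset.univ.filter (fun k => j i k = m)).card = i m)
    (c : (Fin d → ℕ) → ℝ) (x : (Fin p → Fin d) → ℝ)
    (hx : x = ∑ i ∈ I, c i • sBasis d p i (j i)) :
    Real.sqrt (∑ f : Fin p → Fin d, x f ^ 2) / Real.sqrt (p.factorial) ≤
      Real.sqrt (∑ i ∈ I, c i ^ 2) :=
  stmt_1_general d p I j hj c x hx
end

section
/- Consider the two-layer network loss f(W) = (1/(4n)) Σ_{j=1}^n (Σ_{i=1}^r a_i (w_i^T x_j)² − y_j)², with a_i = 1 for i ≤ r/2 and a_i = −1 for i > r/2, and r ≥ 2d+2. Define M(W) = (1/n) Σ_j δ_j x_j x_j^T where δ_j = Σ_i a_i(w_i^T x_j)² − y_j. Then the smallest eigenvalue of the Hessian ∇²f(W) (as a quadratic form on ℝ^{d×r}, restricted to unit Frobenius norm) equals −max_i |λ_i(M)|, the negative of the spectral radius of M. -/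
/-!
Since `|a k| = 1`, each term `a k * (z_kᵀ M z_k)` is at least `-ρ ‖z_k‖²`, where `ρ` is the
spectral radius of `M`, and the Gauss–Newton term is nonnegative; so the form is at least `-ρ` on
the unit sphere. For equality, let `v` be a unit eigenvector of `M` with eigenvalue `μ`, `|μ| = ρ`,
and pick a unit vector `c` supported on the neurons with `a i = -sign μ` such that
`∑ i, c i • w i = 0`: there are at least `r / 2 ≥ d + 1` such neurons, so their weights are linearly
dependent in `ℝ^d`. For `Z = c ⊗ v` the Gauss–Newton term vanishes and the first term is `-|μ|`.
-/

open Finset Matrix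

theorem OrthonormalBasis.sum_dotProduct_mul_dotProduct {ι n : Type*} [Fintype ι] [Fintype n]
    (b : OrthonormalBasis ι ℝ (EuclideanSpace ℝ n)) (u v : n → ℝ) :
    ∑ i, (⇑(b i) ⬝ᵥ u) * (⇑(b i) ⬝ᵥ v) = u ⬝ᵥ v := by
  simpa [EuclideanSpace.inner_eq_star_dotProduct, dotProduct_comm, mul_comm] using
    b.sum_inner_mul_inner (WithLp.toLp 2 u) (WithLp.toLp 2 v)

namespace Matrix.IsHermitian

variable {n : Type*} [Fintype n] [DecidableEq n] {A : Matrix n n ℝ} (hA : A.IsHermitian)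

theorem dotProduct_eigenvectorBasis_mulVec (z : n → ℝ) (i : n) :
    ⇑(hA.eigenvectorBasis i) ⬝ᵥ A *ᵥ z = hA.eigenvalues i * (⇑(hA.eigenvectorBasis i) ⬝ᵥ z) := by
  rw [dotProduct_mulVec, ← mulVec_transpose, ← conjTranspose_eq_transpose_of_trivial, hA.eq,
    mulVec_eigenvectorBasis, smul_dotProduct, smul_eq_mul]

theorem dotProduct_mulVec_eq_sum (z : n → ℝ) :
    z ⬝ᵥ A *ᵥ z = ∑ i, hA.eigenvalues i * (⇑(hA.eigenvectorBasis i) ⬝ᵥ z) ^ 2 := by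
  rw [← hA.eigenvectorBasis.sum_dotProduct_mul_dotProduct]
  simp only [dotProduct_eigenvectorBasis_mulVec]
  exact sum_congr rfl fun i _ => by ring

theorem abs_dotProduct_mulVec_le {m : ℝ} (hm : ∀ i, |hA.eigenvalues i| ≤ m) (z : n → ℝ) :
    |z ⬝ᵥ A *ᵥ z| ≤ m * (z ⬝ᵥ z) := by
  rw [hA.dotProduct_mulVec_eq_sum, ← hA.eigenvectorBasis.sum_dotProduct_mul_dotProduct, mul_sum]
  refine (abs_sum_le_sum_abs _ _).trans (sum_le_sum fun i _ => ?_)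
  rw [abs_mul, abs_sq, ← sq]
  exact mul_le_mul_of_nonneg_right (hm i) (sq_nonneg _)

theorem eigenvectorBasis_dotProduct_self (i : n) :
    ⇑(hA.eigenvectorBasis i) ⬝ᵥ ⇑(hA.eigenvectorBasis i) = 1 := by
  have h := real_inner_self_eq_norm_sq (hA.eigenvectorBasis i)
  rw [hA.eigenvectorBasis.orthonormal.1 i, EuclideanSpace.inner_eq_star_dotProduct] at h
  simpa using h

theorem eigenvectorBasis_dotProduct_mulVec_self (i : n) :
    ⇑(hA.eigenvectorBasis i) ⬝ᵥ A *ᵥ ⇑(hA.eigenvectorBasis i) = hA.eigenvalues i := by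
  rw [hA.dotProduct_eigenvectorBasis_mulVec, eigenvectorBasis_dotProduct_self, mul_one]

end Matrix.IsHermitian

theorem exists_sum_sq_eq_one_sum_smul_eq_zero {ι E : Type*} [Fintype ι] [AddCommGroup E]
    [Module ℝ E] [Module.Finite ℝ E] (w : ι → E) (s : Finset ι)
    (hs : Module.finrank ℝ E < #s) :
    ∃ c : ι → ℝ, (∀ i ∉ s, c i = 0) ∧ ∑ i, c i ^ 2 = 1 ∧ ∑ i, c i • w i = 0 := by
  classical
  obtain ⟨f, hf, i₀, hi₀, hfi₀⟩ := not_linearIndepOn_finset_iff.mp fun h =>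
    hs.not_ge (by simpa using h.fintype_card_le_finrank)
  set g : ι → ℝ := fun i => if i ∈ s then f i else 0
  have hg : ∑ i, g i • w i = 0 := by simpa [g, ite_smul, sum_ite_mem] using hf
  have hpos : 0 < ∑ i, g i ^ 2 := sum_pos' (fun _ _ => sq_nonneg _)
    ⟨i₀, mem_univ _, by simp only [g, if_pos hi₀]; positivity⟩
  refine ⟨fun i => g i / √(∑ i, g i ^ 2), fun i hi => by simp [g, hi], ?_, ?_⟩
  · simp only [div_pow, Real.sq_sqrt hpos.le, ← sum_div, div_self hpos.ne']
  · simp only [div_eq_inv_mul, mul_smul, ← smul_sum, hg, smul_zero]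

theorem dotProduct_mulVec_eq_sum_sum {n : Type*} [Fintype n] (A : Matrix n n ℝ) (z w : n → ℝ) :
    z ⬝ᵥ A *ᵥ w = ∑ i, ∑ j, z i * A i j * w j := by
  simp only [dotProduct, mulVec, mul_sum, mul_assoc]

theorem half_le_card_filter_eq {r : ℕ} {a : Fin r → ℝ}
    (ha : ∀ i, a i = if (i : ℕ) < r / 2 then 1 else -1) {ε : ℝ} (hε : ε = 1 ∨ ε = -1) :
    r / 2 ≤ #{i | a i = ε} := by
  have hlow : #{i : Fin r | (i : ℕ) < r / 2} = r / 2 := by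
    rw [Fin.card_filter_val_lt]; omega
  have hsplit := card_filter_add_card_filter_not (s := univ) fun i : Fin r => (i : ℕ) < r / 2
  rw [card_univ, Fintype.card_fin, hlow] at hsplit
  rcases hε with rfl | rfl
  · refine hlow.ge.trans_eq (congrArg card (filter_congr fun i _ => ?_))
    rw [ha]; split_ifs <;> norm_num [*]
  · calc r / 2 ≤ #{i : Fin r | ¬(i : ℕ) < r / 2} := by omega
      _ = _ := congrArg card (filter_congr fun i _ => by rw [ha]; split_ifs <;> norm_num [*])

section HessianForm

variable {ι n : Type*} [Fintype ι] [Fintype n] {a c : ι → ℝ} {ε : ℝ}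

theorem sum_mul_dotProduct_mulVec_smul (hac : ∀ i, a i * c i = ε * c i) (A : Matrix n n ℝ)
    (v : n → ℝ) :
    ∑ k, a k * ((c k • v) ⬝ᵥ A *ᵥ (c k • v)) = ε * (∑ k, c k ^ 2) * (v ⬝ᵥ A *ᵥ v) := by
  simp only [mulVec_smul, smul_dotProduct, dotProduct_smul, smul_eq_mul, mul_sum, sum_mul]
  exact sum_congr rfl fun k _ => by linear_combination c k * (v ⬝ᵥ A *ᵥ v) * hac k

theorem sum_mul_dotProduct_mul_dotProduct_smul_eq_zero (hac : ∀ i, a i * c i = ε * c i)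
    {W : ι → n → ℝ} (hW : ∑ i, c i • W i = 0) (x v : n → ℝ) :
    ∑ i, a i * (W i ⬝ᵥ x) * (x ⬝ᵥ c i • v) = 0 :=
  calc ∑ i, a i * (W i ⬝ᵥ x) * (x ⬝ᵥ c i • v)
      = ε * (x ⬝ᵥ v) * ((∑ i, c i • W i) ⬝ᵥ x) := by
        simp only [sum_dotProduct, mul_sum, dotProduct_smul, smul_dotProduct, smul_eq_mul]
        exact sum_congr rfl fun i _ => by linear_combination (W i ⬝ᵥ x) * (x ⬝ᵥ v) * hac i
    _ = 0 := by rw [hW, zero_dotProduct, mul_zero]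

variable {N : ℕ}

noncomputable def hessianForm (a : ι → ℝ) (W : ι → n → ℝ) (x : Fin N → n → ℝ) (M : Matrix n n ℝ)
    (Z : ι → n → ℝ) : ℝ :=
  ∑ k, a k * (Z k ⬝ᵥ M *ᵥ Z k) + 2 / N * ∑ j, (∑ i, a i * (W i ⬝ᵥ x j) * (x j ⬝ᵥ Z i)) ^ 2

theorem hessianForm_smul (hac : ∀ i, a i * c i = ε * c i) {W : ι → n → ℝ}
    (hW : ∑ i, c i • W i = 0) (x : Fin N → n → ℝ) (M : Matrix n n ℝ) (v : n → ℝ) :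
    hessianForm a W x M (fun i => c i • v) = ε * (∑ k, c k ^ 2) * (v ⬝ᵥ M *ᵥ v) := by
  simp only [hessianForm, sum_mul_dotProduct_mulVec_smul hac,
    sum_mul_dotProduct_mul_dotProduct_smul_eq_zero hac hW, ne_eq, OfNat.ofNat_ne_zero,
    not_false_eq_true, zero_pow, sum_const_zero, mul_zero, add_zero]

theorem neg_mul_le_hessianForm [DecidableEq n] (ha : ∀ i, |a i| ≤ 1) (W : ι → n → ℝ)
    (x : Fin N → n → ℝ) {M : Matrix n n ℝ} (hM : M.IsHermitian) {ρ : ℝ}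
    (hρ : ∀ i, |hM.eigenvalues i| ≤ ρ) (Z : ι → n → ℝ) :
    -(ρ * ∑ k, Z k ⬝ᵥ Z k) ≤ hessianForm a W x M Z := by
  have hterm : ∀ k, -(ρ * (Z k ⬝ᵥ Z k)) ≤ a k * (Z k ⬝ᵥ M *ᵥ Z k) := fun k =>
    calc -(ρ * (Z k ⬝ᵥ Z k)) ≤ -|Z k ⬝ᵥ M *ᵥ Z k| := neg_le_neg (hM.abs_dotProduct_mulVec_le hρ _)
      _ ≤ -|a k * (Z k ⬝ᵥ M *ᵥ Z k)| := by
        rw [abs_mul]; exact neg_le_neg (mul_le_of_le_one_left (abs_nonneg _) (ha k))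
      _ ≤ _ := neg_abs_le _
  calc -(ρ * ∑ k, Z k ⬝ᵥ Z k) = ∑ k, -(ρ * (Z k ⬝ᵥ Z k)) := by rw [sum_neg_distrib, mul_sum]
    _ ≤ ∑ k, a k * (Z k ⬝ᵥ M *ᵥ Z k) := sum_le_sum fun k _ => hterm k
    _ ≤ _ := le_add_of_nonneg_right (by positivity)

theorem exists_hessianForm_eq_neg_abs_eigenvalues [DecidableEq n]
    (ha : ∀ ε : ℝ, ε = 1 ∨ ε = -1 → Fintype.card n < #{i | a i = ε}) (W : ι → n → ℝ)
    (x : Fin N → n → ℝ) {M : Matrix n n ℝ} (hM : M.IsHermitian) (i₀ : n) :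
    ∃ Z : ι → n → ℝ, ∑ k, Z k ⬝ᵥ Z k = 1 ∧ hessianForm a W x M Z = -|hM.eigenvalues i₀| := by
  set μ := hM.eigenvalues i₀
  -- put all the weight on neurons whose sign `a i` is opposite to that of `μ`
  obtain ⟨ε, hε, hεμ⟩ : ∃ ε : ℝ, (ε = 1 ∨ ε = -1) ∧ ε * μ = -|μ| := by
    rcases le_or_gt 0 μ with h | h
    · exact ⟨-1, Or.inr rfl, by rw [abs_of_nonneg h]; ring⟩
    · exact ⟨1, Or.inl rfl, by rw [abs_of_neg h]; ring⟩
  obtain ⟨c, hcs, hc1, hcW⟩ := exists_sum_sq_eq_one_sum_smul_eq_zero W {i | a i = ε} <| by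
    simpa using ha ε hε
  have hac : ∀ i, a i * c i = ε * c i := fun i => by
    by_cases hi : a i = ε
    · rw [hi]
    · rw [hcs i (by simpa using hi), mul_zero, mul_zero]
  refine ⟨fun i => c i • ⇑(hM.eigenvectorBasis i₀), ?_, ?_⟩
  · simp only [smul_dotProduct, dotProduct_smul, hM.eigenvectorBasis_dotProduct_self,
      smul_eq_mul, mul_one, ← sq, hc1]
  · rw [hessianForm_smul hac hcW, hc1, hM.eigenvectorBasis_dotProduct_mulVec_self, mul_one, hεμ]

end HessianForm

theorem stmt_10_general (d r n : ℕ) (hd : 0 < d)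
    (hr : 2 * d + 2 ≤ r)
    (a : Fin r → ℝ) (ha : ∀ i, a i = if (i : ℕ) < r / 2 then 1 else -1)
    (x : Fin n → Fin d → ℝ) (W : Fin r → Fin d → ℝ)
    (M : Matrix (Fin d) (Fin d) ℝ)
    (hMh : M.IsHermitian)
    (Q : (Fin r → Fin d → ℝ) → ℝ)
    (hQ : ∀ Z, Q Z = (∑ k, a k * ∑ k1, ∑ k2, Z k k1 * M k1 k2 * Z k k2)
      + (2 / (n : ℝ)) * ∑ j,
          (∑ i, a i * (∑ k, W i k * x j k) * (∑ k, x j k * Z i k)) ^ 2) :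
    IsLeast {q : ℝ | ∃ Z : Fin r → Fin d → ℝ,
        Real.sqrt (∑ i, ∑ k, Z i k ^ 2) = 1 ∧ q = Q Z}
      (-(Finset.univ.sup' (Finset.univ_nonempty_iff.mpr ⟨⟨0, hd⟩⟩)
          fun i : Fin d => |hMh.eigenvalues i|)) := by
  have hQ' : Q = hessianForm a W x M := funext fun Z => by
    rw [hQ, hessianForm]; simp only [dotProduct_mulVec_eq_sum_sum]; rfl
  have hnorm (Z : Fin r → Fin d → ℝ) : √(∑ i, ∑ k, Z i k ^ 2) = 1 ↔ ∑ i, Z i ⬝ᵥ Z i = 1 := by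
    simp only [Real.sqrt_eq_one, dotProduct, sq]
  have hsign (ε : ℝ) (hε : ε = 1 ∨ ε = -1) : Fintype.card (Fin d) < #{i | a i = ε} := by
    have := half_le_card_filter_eq ha hε
    rw [Fintype.card_fin]; omega
  refine ⟨?_, ?_⟩
  · obtain ⟨i₀, -, hi₀⟩ := exists_mem_eq_sup' (univ_nonempty_iff.mpr ⟨⟨0, hd⟩⟩)
      fun i : Fin d => |hMh.eigenvalues i|
    obtain ⟨Z, hZ1, hZ⟩ := exists_hessianForm_eq_neg_abs_eigenvalues hsign W x hMh i₀
    exact ⟨Z, (hnorm Z).mpr hZ1, by rw [hQ', hZ, hi₀]⟩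
  · rintro _ ⟨Z, hZ, rfl⟩
    have habs (i : Fin r) : |a i| ≤ 1 := by rw [ha]; split_ifs <;> norm_num
    have hρ (i : Fin d) : |hMh.eigenvalues i| ≤
        univ.sup' (univ_nonempty_iff.mpr ⟨⟨0, hd⟩⟩) fun i => |hMh.eigenvalues i| :=
      le_sup' (fun i => |hMh.eigenvalues i|) (mem_univ i)
    have := neg_mul_le_hessianForm habs W x hMh hρ Z
    rwa [(hnorm Z).mp hZ, mul_one, ← hQ'] at this

/-- For the two-layer quadratic-activation loss with `r ≥ 2d+2`, the smallest eigenvalue of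
the Hessian `∇²f(W)` — i.e. the minimum of the Hessian quadratic form over `‖Z‖_F = 1` —
equals `−max_i |λ_i(M)|`, where `M = (1/n)∑_j δ_j x_j x_jᵀ`. -/
theorem stmt_10 (d r n : ℕ) (hd : 0 < d) (hn : 0 < n)
    (hr : 2 * d + 2 ≤ r) (hre : Even r)
    (a : Fin r → ℝ) (ha : ∀ i, a i = if (i : ℕ) < r / 2 then 1 else -1)
    (x : Fin n → Fin d → ℝ) (y : Fin n → ℝ) (W : Fin r → Fin d → ℝ)
    (δ : Fin n → ℝ)
    (hδ : ∀ j, δ j = (∑ i, a i * (∑ k, W i k * x j k) ^ 2) - y j)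
    (M : Matrix (Fin d) (Fin d) ℝ)
    (hM : ∀ k l, M k l = (1 / (n : ℝ)) * ∑ j, δ j * x j k * x j l)
    (hMh : M.IsHermitian)
    (Q : (Fin r → Fin d → ℝ) → ℝ)
    (hQ : ∀ Z, Q Z = (∑ k, a k * ∑ k1, ∑ k2, Z k k1 * M k1 k2 * Z k k2)
      + (2 / (n : ℝ)) * ∑ j,
          (∑ i, a i * (∑ k, W i k * x j k) * (∑ k, x j k * Z i k)) ^ 2) :
    IsLeast {q : ℝ | ∃ Z : Fin r → Fin d → ℝ,
        Real.sqrt (∑ i, ∑ k, Z i k ^ 2) = 1 ∧ q = Q Z}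
      (-(Finset.univ.sup' (Finset.univ_nonempty_iff.mpr ⟨⟨0, hd⟩⟩)
          fun i : Fin d => |hMh.eigenvalues i|)) :=
  stmt_10_general d r n hd hr a ha x W M hMh Q hQ
end

section
/- With the loss f(W) = (1/(4n)) Σ_j δ_j² = (1/(4n)) ‖δ‖₂², where δ_j = Σ_i a_i(w_i^T x_j)² − y_j, suppose the matrix X = [x_1^{⊗2}, ..., x_n^{⊗2}] ∈ ℝ^{d²×n} has full column rank with smallest singular value at least σ > 0. If the spectral norm of M = (1/n) Σ_j δ_j x_j x_j^T is at most λ, then f(W) ≤ n d λ² / (4σ²). -/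
open Finset

/-- If `X = [x_1^{⊗2},…,x_n^{⊗2}]` has smallest singular value at least `σ` and the
spectral norm of `M = (1/n)∑_j δ_j x_j x_jᵀ` is at most `λ`, then the two-layer loss
satisfies `f(W) = (1/(4n))‖δ‖₂² ≤ n d λ²/(4σ²)`. -/
theorem stmt_11 (d r n : ℕ) (hd : 0 < d) (hn : 0 < n)
    (a : Fin r → ℝ)
    (x : Fin n → Fin d → ℝ) (y : Fin n → ℝ) (W : Fin r → Fin d → ℝ)
    (δ : Fin n → ℝ)
    (hδ : ∀ j, δ j = (∑ i, a i * (∑ k, W i k * x j k) ^ 2) - y j)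
    (fW : ℝ) (hf : fW = (1 / (4 * (n : ℝ))) * ∑ j, δ j ^ 2)
    (X : Matrix (Fin d × Fin d) (Fin n) ℝ)
    (hX : ∀ k l j, X (k, l) j = x j k * x j l)
    (M : Matrix (Fin d) (Fin d) ℝ)
    (hM : ∀ k l, M k l = (1 / (n : ℝ)) * ∑ j, δ j * x j k * x j l)
    (σ lam : ℝ) (hσ : 0 < σ)
    (hXσ : ∀ v : Fin n → ℝ,
      σ * Real.sqrt (∑ j, v j ^ 2) ≤ Real.sqrt (∑ q, (X.mulVec v) q ^ 2))
    (hMlam : ∀ u : Fin d → ℝ,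
      Real.sqrt (∑ k, (M.mulVec u) k ^ 2) ≤ lam * Real.sqrt (∑ k, u k ^ 2)) :
    fW ≤ (n : ℝ) * d * lam ^ 2 / (4 * σ ^ 2) := by
  have hn0 : (0:ℝ) < (n:ℝ) := by exact_mod_cast hn
  set S : ℝ := ∑ j, δ j ^ 2 with hS
  have hS0 : 0 ≤ S := Finset.sum_nonneg fun j _ => sq_nonneg _
  -- X.mulVec δ = n • M (as entries)
  have hXv : ∀ k l, (X.mulVec δ) (k, l) = (n : ℝ) * M k l := by
    intro k l
    rw [hM]
    simp only [Matrix.mulVec, dotProduct]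
    rw [← mul_assoc]
    rw [mul_one_div, div_self hn0.ne', one_mul]
    apply Finset.sum_congr rfl
    intro j _
    rw [hX]; ring
  set F : ℝ := ∑ k, ∑ l, M k l ^ 2 with hF
  have hT : (∑ q, (X.mulVec δ) q ^ 2) = (n:ℝ)^2 * F := by
    rw [hF, Fintype.sum_prod_type, Finset.mul_sum]
    apply Finset.sum_congr rfl
    intro k _
    rw [Finset.mul_sum]
    apply Finset.sum_congr rfl
    intro l _
    rw [hXv]; ring
  -- column bound: each column of M has norm ≤ lam
  have hlam0 : 0 ≤ lam := by
    have h := hMlam ((fun k => if k = (⟨0, hd⟩ : Fin d) then (1:ℝ) else 0))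
    have h1 : (∑ k, ((fun k => if k = (⟨0, hd⟩ : Fin d) then (1:ℝ) else 0)) k ^ 2) = 1 := by
      simp
    rw [h1, Real.sqrt_one, mul_one] at h
    exact le_trans (Real.sqrt_nonneg _) h
  have hcol : ∀ l : Fin d, (∑ k, M k l ^ 2) ≤ lam ^ 2 := by
    intro l
    have h := hMlam (fun k => if k = l then (1:ℝ) else 0)
    have h1 : (∑ k : Fin d, (if k = l then (1:ℝ) else 0) ^ 2) = 1 := by
      simp
    have h2 : ∀ k, (M.mulVec (fun k => if k = l then (1:ℝ) else 0)) k = M k l := by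
      intro k
      simp [Matrix.mulVec, dotProduct]
    rw [h1, Real.sqrt_one, mul_one] at h
    simp only [h2] at h
    calc (∑ k, M k l ^ 2) = Real.sqrt (∑ k, M k l ^ 2) ^ 2 := by
          rw [Real.sq_sqrt (Finset.sum_nonneg fun k _ => sq_nonneg _)]
      _ ≤ lam ^ 2 := by exact pow_le_pow_left₀ (Real.sqrt_nonneg _) h 2
  have hFd : F ≤ (d:ℝ) * lam ^ 2 := by
    rw [hF, Finset.sum_comm]
    calc (∑ l, ∑ k, M k l ^ 2) ≤ ∑ _l : Fin d, lam ^ 2 := Finset.sum_le_sum fun l _ => hcol l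
      _ = (d:ℝ) * lam ^ 2 := by simp [mul_comm]
  -- from hXσ: σ^2 * S ≤ n^2 * F
  have hmain : σ ^ 2 * S ≤ (n:ℝ)^2 * F := by
    have h := hXσ δ
    have hsq := pow_le_pow_left₀ (by positivity) h 2
    rw [mul_pow, Real.sq_sqrt hS0,
      Real.sq_sqrt (Finset.sum_nonneg fun q _ => sq_nonneg ((X.mulVec δ) q)), hT] at hsq
    exact hsq
  have hSle : S ≤ (n:ℝ)^2 * (d:ℝ) * lam^2 / σ^2 := by
    rw [le_div_iff₀ (by positivity)]
    calc S * σ^2 = σ^2 * S := by ring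
      _ ≤ (n:ℝ)^2 * F := hmain
      _ ≤ (n:ℝ)^2 * ((d:ℝ) * lam^2) := by
          apply mul_le_mul_of_nonneg_left hFd (by positivity)
      _ = (n:ℝ)^2 * (d:ℝ) * lam^2 := by ring
  rw [hf]
  rw [show (n:ℝ) * d * lam ^ 2 / (4 * σ ^ 2)
      = (1 / (4 * (n:ℝ))) * ((n:ℝ)^2 * (d:ℝ) * lam^2 / σ^2) by
    field_simp]
  exact mul_le_mul_of_nonneg_left hSle (by positivity)
end

section
/- Let g(W) = f(W) + (γ/2)‖W‖_F² where f(W) = (1/(4n)) Σ_j (x_j^T W A W^T x_j − y_j)² (quartic-in-W two-layer loss with fixed diagonal sign matrix A). Suppose ‖x_j‖₂ ≤ B and |y_j| ≤ Y for all j. Then on the set {W : ‖W‖_F² ≤ Γ}, the gradient ∇g is Lipschitz with constant 3B⁴Γ + YB² + γ, i.e., ‖∇g(U) − ∇g(V)‖_F ≤ (3B⁴Γ + YB² + γ)‖U − V‖_F for all U, V in this set. -/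
/-!
With `P = x xᵀ` and `q(W) = xᵀ W A Wᵀ x`, the difference of two single-sample gradients splits as
`(q(U) - y) • P (U - V) A + (q(U) - q(V)) • P V A`, and
`q(U) - q(V) = xᵀ ((U - V) A Uᵀ + V A (U - V)ᵀ) x`.
Right multiplication by the sign matrix `A` does not increase the Frobenius norm, which is
submultiplicative, so with `‖x‖ ≤ B` and `‖U‖, ‖V‖ ≤ √Γ` the four factors are bounded by
`B²Γ + Y`, `B² ‖U - V‖`, `2 B² √Γ ‖U - V‖` and `B² √Γ`. This gives `3 B⁴ Γ + Y B²` per sample,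
hence for the average, and the ridge term adds `γ`.
-/

open Finset Matrix WithLp

theorem norm_one_div_smul_sum_le {E : Type*} [SeminormedAddCommGroup E] [NormedSpace ℝ E]
    {n : ℕ} (hn : 0 < n) {f : Fin n → E} {C : ℝ} (hf : ∀ j, ‖f j‖ ≤ C) :
    ‖(1 / (n : ℝ)) • ∑ j, f j‖ ≤ C := by
  have hn' : (0 : ℝ) < n := Nat.cast_pos.2 hn
  rw [norm_smul, Real.norm_of_nonneg (by positivity)]
  calc 1 / (n : ℝ) * ‖∑ j, f j‖ ≤ 1 / n * (n * C) := by
        gcongr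
        simpa using (norm_sum_le univ f).trans (sum_le_sum fun j _ => hf j)
    _ = C := by field_simp

section Frobenius

attribute [local instance] Matrix.frobeniusSeminormedAddCommGroup Matrix.frobeniusNormedSpace

section

variable {m n : Type*} [Fintype m] [Fintype n]

theorem Matrix.frobenius_norm_eq_sqrt (M : Matrix m n ℝ) : ‖M‖ = √(∑ i, ∑ j, M i j ^ 2) := by
  simp only [frobenius_norm_def, Real.norm_eq_abs, Real.rpow_two, sq_abs, Real.sqrt_eq_rpow]

theorem EuclideanSpace.norm_toLp_eq_sqrt (v : n → ℝ) : ‖toLp 2 v‖ = √(∑ i, v i ^ 2) := by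
  simp [EuclideanSpace.norm_eq]

theorem Matrix.abs_apply_le_frobenius_norm (M : Matrix m n ℝ) (i : m) (j : n) :
    |M i j| ≤ ‖M‖ := by
  rw [frobenius_norm_eq_sqrt, ← Real.sqrt_sq_eq_abs]
  gcongr
  calc M i j ^ 2 ≤ ∑ j, M i j ^ 2 := single_le_sum (fun j _ => sq_nonneg (M i j)) (mem_univ j)
    _ ≤ ∑ i, ∑ j, M i j ^ 2 :=
      single_le_sum (f := fun i => ∑ j, M i j ^ 2) (fun i _ => by positivity) (mem_univ i)

theorem Matrix.frobenius_norm_mul_le_of_isDiag {A : Matrix n n ℝ} (hA : A.IsDiag)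
    (hA1 : ∀ i, |A i i| ≤ 1) (M : Matrix m n ℝ) : ‖M * A‖ ≤ ‖M‖ := by
  classical
  rw [← hA.diagonal_diag, frobenius_norm_eq_sqrt, frobenius_norm_eq_sqrt]
  refine Real.sqrt_le_sqrt (sum_le_sum fun i _ => sum_le_sum fun j _ => ?_)
  rw [mul_diagonal, mul_pow, diag_apply]
  have : A j j ^ 2 ≤ 1 := by simpa using (sq_le_one_iff_abs_le_one _).2 (hA1 j)
  nlinarith [sq_nonneg (M i j)]

theorem Matrix.abs_dotProduct_mulVec_le (x : m → ℝ) (M : Matrix m n ℝ) (z : n → ℝ) :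
    |x ⬝ᵥ M *ᵥ z| ≤ ‖toLp 2 x‖ * ‖M‖ * ‖toLp 2 z‖ := by
  have h : x ⬝ᵥ M *ᵥ z = (replicateRow (Fin 1) x * M * replicateCol (Fin 1) z) 0 0 := by
    rw [dotProduct_mulVec, ← replicateRow_vecMul, replicateRow_mul_replicateCol_apply]
  rw [h, ← frobenius_norm_replicateRow (ι := Fin 1) x,
    ← frobenius_norm_replicateCol (ι := Fin 1) z]
  calc _ ≤ ‖replicateRow (Fin 1) x * M * replicateCol (Fin 1) z‖ :=
        abs_apply_le_frobenius_norm _ _ _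
    _ ≤ _ := (frobenius_norm_mul _ _).trans
        (mul_le_mul_of_nonneg_right (frobenius_norm_mul _ _) (norm_nonneg _))

theorem Matrix.frobenius_norm_vecMulVec_le (x : m → ℝ) (z : n → ℝ) :
    ‖vecMulVec x z‖ ≤ ‖toLp 2 x‖ * ‖toLp 2 z‖ := by
  rw [vecMulVec_eq (Fin 1), ← frobenius_norm_replicateRow (ι := Fin 1) z,
    ← frobenius_norm_replicateCol (ι := Fin 1) x]
  exact frobenius_norm_mul _ _

end

section TwoLayerLoss

variable {d r : Type*} [Fintype d] [Fintype r] (A : Matrix r r ℝ)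

omit [Fintype d] in
theorem mul_mul_transpose_sub_mul_mul_transpose (U V : Matrix d r ℝ) :
    U * A * Uᵀ - V * A * Vᵀ = (U - V) * A * Uᵀ + V * A * (U - V)ᵀ := by
  simp only [Matrix.sub_mul, Matrix.mul_sub, transpose_sub]
  abel

variable {A} (hA : ∀ M : Matrix d r ℝ, ‖M * A‖ ≤ ‖M‖)
include hA

theorem abs_dotProduct_mul_mul_transpose_mulVec_le (x : d → ℝ) (P Q : Matrix d r ℝ) :
    |x ⬝ᵥ (P * A * Qᵀ) *ᵥ x| ≤ ‖toLp 2 x‖ ^ 2 * (‖P‖ * ‖Q‖) := by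
  have hPQ : ‖P * A * Qᵀ‖ ≤ ‖P‖ * ‖Q‖ := by
    refine (frobenius_norm_mul _ _).trans ?_
    rw [frobenius_norm_transpose]
    exact mul_le_mul_of_nonneg_right (hA P) (norm_nonneg _)
  calc |x ⬝ᵥ (P * A * Qᵀ) *ᵥ x| ≤ ‖toLp 2 x‖ * ‖P * A * Qᵀ‖ * ‖toLp 2 x‖ :=
        abs_dotProduct_mulVec_le _ _ _
    _ ≤ ‖toLp 2 x‖ * (‖P‖ * ‖Q‖) * ‖toLp 2 x‖ := by gcongr
    _ = _ := by ring

theorem abs_dotProduct_mul_mul_transpose_mulVec_sub_le (x : d → ℝ) (U V : Matrix d r ℝ) :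
    |x ⬝ᵥ (U * A * Uᵀ) *ᵥ x - x ⬝ᵥ (V * A * Vᵀ) *ᵥ x|
      ≤ ‖toLp 2 x‖ ^ 2 * (‖U‖ + ‖V‖) * ‖U - V‖ := by
  rw [← dotProduct_sub, ← sub_mulVec, mul_mul_transpose_sub_mul_mul_transpose, add_mulVec,
    dotProduct_add]
  calc _ ≤ ‖toLp 2 x‖ ^ 2 * (‖U - V‖ * ‖U‖) + ‖toLp 2 x‖ ^ 2 * (‖V‖ * ‖U - V‖) :=
        (abs_add_le _ _).trans (add_le_add (abs_dotProduct_mul_mul_transpose_mulVec_le hA _ _ _)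
          (abs_dotProduct_mul_mul_transpose_mulVec_le hA _ _ _))
    _ = _ := by ring

omit hA in
variable (A) in
/-- The gradient of the single-sample loss `W ↦ (xᵀ W A Wᵀ x - y)² / 4` for symmetric `A`. -/
def sampleGrad (x : d → ℝ) (y : ℝ) (W : Matrix d r ℝ) : Matrix d r ℝ :=
  (x ⬝ᵥ (W * A * Wᵀ) *ᵥ x - y) • (vecMulVec x x * W * A)

omit hA in
theorem sampleGrad_sub_sampleGrad (x : d → ℝ) (y : ℝ) (U V : Matrix d r ℝ) :
    sampleGrad A x y U - sampleGrad A x y V =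
      (x ⬝ᵥ (U * A * Uᵀ) *ᵥ x - y) • (vecMulVec x x * (U - V) * A) +
        (x ⬝ᵥ (U * A * Uᵀ) *ᵥ x - x ⬝ᵥ (V * A * Vᵀ) *ᵥ x) • (vecMulVec x x * V * A) := by
  simp only [sampleGrad, Matrix.mul_sub, Matrix.sub_mul]
  module

theorem norm_sampleGrad_sub_sampleGrad_le {x : d → ℝ} {y B Y R : ℝ} (hx : ‖toLp 2 x‖ ≤ B)
    (hy : |y| ≤ Y) {U V : Matrix d r ℝ} (hU : ‖U‖ ≤ R) (hV : ‖V‖ ≤ R) :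
    ‖sampleGrad A x y U - sampleGrad A x y V‖ ≤ (3 * B ^ 4 * R ^ 2 + Y * B ^ 2) * ‖U - V‖ := by
  have hB : 0 ≤ B := (norm_nonneg _).trans hx
  have hR : 0 ≤ R := (norm_nonneg _).trans hU
  have hx2 : ‖toLp 2 x‖ ^ 2 ≤ B ^ 2 := by gcongr
  have hproj : ∀ M : Matrix d r ℝ, ‖vecMulVec x x * M * A‖ ≤ B ^ 2 * ‖M‖ := fun M =>
    calc ‖vecMulVec x x * M * A‖ ≤ ‖vecMulVec x x‖ * ‖M‖ := (hA _).trans (frobenius_norm_mul _ _)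
      _ ≤ ‖toLp 2 x‖ * ‖toLp 2 x‖ * ‖M‖ := by gcongr; exact frobenius_norm_vecMulVec_le _ _
      _ ≤ B ^ 2 * ‖M‖ := by rw [← sq]; gcongr
  have hresidual : |x ⬝ᵥ (U * A * Uᵀ) *ᵥ x - y| ≤ B ^ 2 * R ^ 2 + Y :=
    calc _ ≤ |x ⬝ᵥ (U * A * Uᵀ) *ᵥ x| + |y| := abs_sub _ _
      _ ≤ ‖toLp 2 x‖ ^ 2 * (‖U‖ * ‖U‖) + Y :=
        add_le_add (abs_dotProduct_mul_mul_transpose_mulVec_le hA _ _ _) hy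
      _ ≤ B ^ 2 * R ^ 2 + Y := by rw [sq R]; gcongr
  have hquad : |x ⬝ᵥ (U * A * Uᵀ) *ᵥ x - x ⬝ᵥ (V * A * Vᵀ) *ᵥ x| ≤ B ^ 2 * (2 * R) * ‖U - V‖ :=
    (abs_dotProduct_mul_mul_transpose_mulVec_sub_le hA _ _ _).trans (by gcongr; linarith)
  rw [sampleGrad_sub_sampleGrad]
  calc _ ≤ |x ⬝ᵥ (U * A * Uᵀ) *ᵥ x - y| * ‖vecMulVec x x * (U - V) * A‖ +
        |x ⬝ᵥ (U * A * Uᵀ) *ᵥ x - x ⬝ᵥ (V * A * Vᵀ) *ᵥ x| * ‖vecMulVec x x * V * A‖ :=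
        (norm_add_le _ _).trans_eq (by simp only [norm_smul, Real.norm_eq_abs])
    _ ≤ (B ^ 2 * R ^ 2 + Y) * (B ^ 2 * ‖U - V‖) + B ^ 2 * (2 * R) * ‖U - V‖ * (B ^ 2 * R) := by
        have := (abs_nonneg _).trans hresidual
        gcongr
        exacts [hproj _, (hproj V).trans (by gcongr)]
    _ = _ := by ring

end TwoLayerLoss

/-- The gradient of `g(W) = (1/(4n))∑_j (x_jᵀ W A Wᵀ x_j − y_j)² + (γ/2)‖W‖_F²` is
Lipschitz with constant `3B⁴Γ + YB² + γ` on the set `{W : ‖W‖_F² ≤ Γ}`. -/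
theorem stmt_13 (d r n : ℕ) (hn : 0 < n)
    (A : Matrix (Fin r) (Fin r) ℝ) (hAdiag : A.IsDiag)
    (hA : ∀ i, A i i = 1 ∨ A i i = -1)
    (x : Fin n → Fin d → ℝ) (y : Fin n → ℝ)
    (B Y Γ γ : ℝ) (hγ : 0 ≤ γ)
    (hB : ∀ j, Real.sqrt (∑ k, x j k ^ 2) ≤ B)
    (hY : ∀ j, |y j| ≤ Y)
    (Grad : Matrix (Fin d) (Fin r) ℝ → Matrix (Fin d) (Fin r) ℝ)
    (hGrad : ∀ W, Grad W =
      (1 / (n : ℝ)) •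
        (∑ j, ((x j ⬝ᵥ (W * A * Wᵀ).mulVec (x j)) - y j) •
          (Matrix.vecMulVec (x j) (x j) * W * A)) + γ • W)
    (U V : Matrix (Fin d) (Fin r) ℝ)
    (hU : ∑ i, ∑ k, U i k ^ 2 ≤ Γ) (hV : ∑ i, ∑ k, V i k ^ 2 ≤ Γ) :
    Real.sqrt (∑ i, ∑ k, (Grad U - Grad V) i k ^ 2) ≤
      (3 * B ^ 4 * Γ + Y * B ^ 2 + γ) * Real.sqrt (∑ i, ∑ k, (U - V) i k ^ 2) := by
  have hΓ : 0 ≤ Γ := (by positivity : (0 : ℝ) ≤ ∑ i, ∑ k, U i k ^ 2).trans hU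
  have hball : ∀ W : Matrix (Fin d) (Fin r) ℝ, ∑ i, ∑ k, W i k ^ 2 ≤ Γ → ‖W‖ ≤ √Γ :=
    fun W hW => (frobenius_norm_eq_sqrt W).trans_le (Real.sqrt_le_sqrt hW)
  have hcontract : ∀ M : Matrix (Fin d) (Fin r) ℝ, ‖M * A‖ ≤ ‖M‖ :=
    frobenius_norm_mul_le_of_isDiag hAdiag fun i => by rcases hA i with h | h <;> simp [h]
  have hsample : ∀ j, ‖sampleGrad A (x j) (y j) U - sampleGrad A (x j) (y j) V‖ ≤
      (3 * B ^ 4 * Γ + Y * B ^ 2) * ‖U - V‖ := fun j => by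
    simpa only [Real.sq_sqrt hΓ] using norm_sampleGrad_sub_sampleGrad_le hcontract
      ((EuclideanSpace.norm_toLp_eq_sqrt _).trans_le (hB j)) (hY j) (hball U hU) (hball V hV)
  have hdiff : Grad U - Grad V =
      (1 / (n : ℝ)) • ∑ j, (sampleGrad A (x j) (y j) U - sampleGrad A (x j) (y j) V) +
        γ • (U - V) := by
    simp only [hGrad, sampleGrad, sum_sub_distrib]
    module
  rw [← frobenius_norm_eq_sqrt, ← frobenius_norm_eq_sqrt, hdiff]
  calc _ ≤ (3 * B ^ 4 * Γ + Y * B ^ 2) * ‖U - V‖ + γ * ‖U - V‖ :=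
        (norm_add_le _ _).trans (add_le_add (norm_one_div_smul_sum_le hn hsample)
          (by rw [norm_smul, Real.norm_of_nonneg hγ]))
    _ = _ := by ring

end Frobenius
end

section
/- With the same setup, the Hessian of g is Lipschitz on {W : ‖W‖_F² ≤ Γ} with constant 6B⁴√Γ: for all U, V with ‖U‖_F², ‖V‖_F² ≤ Γ and all Z ∈ ℝ^{d×r}, |∇²g(U)(Z,Z) − ∇²g(V)(Z,Z)| ≤ 6B⁴√Γ · ‖U − V‖_F · ‖Z‖_F². -/
open Finset

/-- Cauchy–Schwarz in sqrt form with abs. -/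
lemma my_cs {ι : Type*} (s : Finset ι) (f g : ι → ℝ) :
    |∑ i ∈ s, f i * g i| ≤ Real.sqrt (∑ i ∈ s, f i ^ 2) * Real.sqrt (∑ i ∈ s, g i ^ 2) := by
  rw [← Real.sqrt_mul (by positivity)]
  apply Real.le_sqrt_of_sq_le
  rw [sq_abs]
  exact Finset.sum_mul_sq_le_sq_mul_sq s f g

lemma my_cs_abs {ι : Type*} (s : Finset ι) (f g : ι → ℝ) :
    ∑ i ∈ s, |f i| * |g i| ≤ Real.sqrt (∑ i ∈ s, f i ^ 2) * Real.sqrt (∑ i ∈ s, g i ^ 2) := by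
  have h := my_cs s (fun i => |f i|) (fun i => |g i|)
  simp only [sq_abs] at h
  exact le_trans (le_abs_self _) h

set_option maxHeartbeats 1000000

/-- The Hessian of `g(W) = (1/(4n))∑_j (x_jᵀ W A Wᵀ x_j − y_j)² + (γ/2)‖W‖_F²` is
Lipschitz with constant `6B⁴√Γ` on `{W : ‖W‖_F² ≤ Γ}`:
`|∇²g(U)(Z,Z) − ∇²g(V)(Z,Z)| ≤ 6B⁴√Γ ‖U−V‖_F ‖Z‖_F²`. -/
theorem stmt_14 (d r n : ℕ) (hn : 0 < n)
    (a : Fin r → ℝ) (ha : ∀ i, a i = 1 ∨ a i = -1)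
    (x : Fin n → Fin d → ℝ) (y : Fin n → ℝ)
    (B Γ γ : ℝ) (hγ : 0 ≤ γ)
    (hB : ∀ j, Real.sqrt (∑ k, x j k ^ 2) ≤ B)
    (QF : (Fin r → Fin d → ℝ) → (Fin r → Fin d → ℝ) → ℝ)
    (hQF : ∀ W Z, QF W Z =
      (∑ k, a k * ((1 / (n : ℝ)) * ∑ j,
        ((∑ i, a i * (∑ m, W i m * x j m) ^ 2) - y j) * (∑ m, x j m * Z k m) ^ 2))
      + (2 / (n : ℝ)) * ∑ j,
          (∑ i, a i * (∑ m, W i m * x j m) * (∑ m, x j m * Z i m)) ^ 2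
      + γ * ∑ i, ∑ m, Z i m ^ 2)
    (U V : Fin r → Fin d → ℝ)
    (hU : ∑ i, ∑ m, U i m ^ 2 ≤ Γ) (hV : ∑ i, ∑ m, V i m ^ 2 ≤ Γ) :
    ∀ Z : Fin r → Fin d → ℝ,
      |QF U Z - QF V Z| ≤
        6 * B ^ 4 * Real.sqrt Γ *
          Real.sqrt (∑ i, ∑ m, (U i m - V i m) ^ 2) * (∑ i, ∑ m, Z i m ^ 2) := by
  intro Z
  have haa : ∀ i, |a i| = 1 := by
    intro i; rcases ha i with h | h <;> rw [h] <;> norm_num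
  -- abbreviations
  set nZ : ℝ := ∑ i, ∑ m, Z i m ^ 2 with hnZdef
  set SD : ℝ := ∑ i, ∑ m, (U i m - V i m) ^ 2 with hSDdef
  set D : ℝ := Real.sqrt SD with hDdef
  have hnZ0 : (0:ℝ) ≤ nZ := by positivity
  have hD0 : (0:ℝ) ≤ D := Real.sqrt_nonneg _
  have hB0 : (0:ℝ) ≤ B := le_trans (Real.sqrt_nonneg _) (hB ⟨0, hn⟩)
  have hΓ0 : (0:ℝ) ≤ Γ := le_trans (by positivity) hU
  have hc : ∀ j, (∑ m, x j m ^ 2) ≤ B ^ 2 := by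
    intro j
    have h0 : (0:ℝ) ≤ ∑ m, x j m ^ 2 := by positivity
    calc (∑ m, x j m ^ 2) = (Real.sqrt (∑ m, x j m ^ 2)) ^ 2 := (Real.sq_sqrt h0).symm
      _ ≤ B ^ 2 := pow_le_pow_left₀ (Real.sqrt_nonneg _) (hB j) 2
  have hc0 : ∀ j, (0:ℝ) ≤ ∑ m, x j m ^ 2 := fun j => by positivity
  -- S, T, P
  set S : (Fin r → Fin d → ℝ) → Fin n → ℝ :=
    fun W j => ∑ i, a i * (∑ m, W i m * x j m) ^ 2 with hSdef
  set T : (Fin r → Fin d → ℝ) → Fin n → ℝ :=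
    fun W j => ∑ i, a i * (∑ m, W i m * x j m) * (∑ m, x j m * Z i m) with hTdef
  set P : Fin n → ℝ := fun j => ∑ k, a k * (∑ m, x j m * Z k m) ^ 2 with hPdef
  -- key algebraic identity
  have e1 : ∀ W : Fin r → Fin d → ℝ,
      (∑ k, a k * ((1 / (n : ℝ)) * ∑ j, (S W j - y j) * (∑ m, x j m * Z k m) ^ 2))
        = (1 / (n : ℝ)) * ∑ j, (S W j - y j) * P j := by
    intro W
    simp only [hPdef, Finset.mul_sum]
    rw [Finset.sum_comm]
    exact Finset.sum_congr rfl fun j _ => Finset.sum_congr rfl fun k _ => by ring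
  have key : QF U Z - QF V Z
      = (1 / (n : ℝ)) * ∑ j, ((S U j - S V j) * P j + 2 * ((T U j) ^ 2 - (T V j) ^ 2)) := by
    rw [hQF U Z, hQF V Z]
    rw [show (∑ k, a k * ((1 / (n : ℝ)) * ∑ j,
        ((∑ i, a i * (∑ m, U i m * x j m) ^ 2) - y j) * (∑ m, x j m * Z k m) ^ 2))
        = (1 / (n : ℝ)) * ∑ j, (S U j - y j) * P j from e1 U]
    rw [show (∑ k, a k * ((1 / (n : ℝ)) * ∑ j,
        ((∑ i, a i * (∑ m, V i m * x j m) ^ 2) - y j) * (∑ m, x j m * Z k m) ^ 2))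
        = (1 / (n : ℝ)) * ∑ j, (S V j - y j) * P j from e1 V]
    have hsplit : ∑ j, ((S U j - S V j) * P j + 2 * ((T U j) ^ 2 - (T V j) ^ 2))
        = ((∑ j, (S U j - y j) * P j) - ∑ j, (S V j - y j) * P j)
          + 2 * ((∑ j, (T U j) ^ 2) - ∑ j, (T V j) ^ 2) := by
      rw [← Finset.sum_sub_distrib, ← Finset.sum_sub_distrib, Finset.mul_sum,
        ← Finset.sum_add_distrib]
      exact Finset.sum_congr rfl fun j _ => by ring
    rw [hsplit]
    have hn' : (n:ℝ) ≠ 0 := Nat.cast_ne_zero.mpr hn.ne'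
    field_simp
    ring
  -- generic T bound
  have hT : ∀ (w : Fin r → Fin d → ℝ) (j : Fin n),
      |∑ i, a i * (∑ m, w i m * x j m) * (∑ m, x j m * Z i m)|
        ≤ B ^ 2 * Real.sqrt (∑ i, ∑ m, w i m ^ 2) * Real.sqrt nZ := by
    intro w j
    set c : ℝ := ∑ m, x j m ^ 2 with hcdef
    set Sw : ℝ := ∑ i, ∑ m, w i m ^ 2 with hSwdef
    have hSw0 : (0:ℝ) ≤ Sw := by positivity
    calc |∑ i, a i * (∑ m, w i m * x j m) * (∑ m, x j m * Z i m)|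
        ≤ ∑ i, |a i * (∑ m, w i m * x j m) * (∑ m, x j m * Z i m)| :=
          Finset.abs_sum_le_sum_abs _ _
      _ = ∑ i, |(∑ m, w i m * x j m)| * |(∑ m, x j m * Z i m)| := by
          refine Finset.sum_congr rfl fun i _ => ?_
          rw [abs_mul, abs_mul, haa i, one_mul]
      _ ≤ Real.sqrt (∑ i, (∑ m, w i m * x j m) ^ 2)
            * Real.sqrt (∑ i, (∑ m, x j m * Z i m) ^ 2) := my_cs_abs _ _ _
      _ ≤ Real.sqrt (c * Sw) * Real.sqrt (c * nZ) := by
          gcongr Real.sqrt ?_ * Real.sqrt ?_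
          · rw [hSwdef, Finset.mul_sum]
            refine Finset.sum_le_sum fun i _ => ?_
            have := Finset.sum_mul_sq_le_sq_mul_sq Finset.univ (w i) (x j)
            calc (∑ m, w i m * x j m) ^ 2 ≤ (∑ m, w i m ^ 2) * ∑ m, x j m ^ 2 := this
              _ = c * ∑ m, w i m ^ 2 := by rw [mul_comm]
          · rw [hnZdef, Finset.mul_sum]
            refine Finset.sum_le_sum fun i _ => ?_
            exact Finset.sum_mul_sq_le_sq_mul_sq Finset.univ (x j) (Z i)
      _ = (Real.sqrt c * Real.sqrt Sw) * (Real.sqrt c * Real.sqrt nZ) := by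
          rw [Real.sqrt_mul (hc0 j), Real.sqrt_mul (hc0 j)]
      _ = c * (Real.sqrt Sw * Real.sqrt nZ) := by
          rw [show (Real.sqrt c * Real.sqrt Sw) * (Real.sqrt c * Real.sqrt nZ)
            = (Real.sqrt c * Real.sqrt c) * (Real.sqrt Sw * Real.sqrt nZ) from by ring,
            Real.mul_self_sqrt (hc0 j)]
      _ ≤ B ^ 2 * (Real.sqrt Sw * Real.sqrt nZ) := by
          have := hc j
          apply mul_le_mul_of_nonneg_right this (by positivity)
      _ = B ^ 2 * Real.sqrt Sw * Real.sqrt nZ := by ring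
  -- bounds on square roots of norms
  have hUs : Real.sqrt (∑ i, ∑ m, U i m ^ 2) ≤ Real.sqrt Γ := Real.sqrt_le_sqrt hU
  have hVs : Real.sqrt (∑ i, ∑ m, V i m ^ 2) ≤ Real.sqrt Γ := Real.sqrt_le_sqrt hV
  -- P bound
  have hP : ∀ j, |P j| ≤ B ^ 2 * nZ := by
    intro j
    calc |P j| ≤ ∑ k, |a k * (∑ m, x j m * Z k m) ^ 2| := Finset.abs_sum_le_sum_abs _ _
      _ = ∑ k, (∑ m, x j m * Z k m) ^ 2 := by
          refine Finset.sum_congr rfl fun k _ => ?_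
          rw [abs_mul, haa k, one_mul, abs_of_nonneg (sq_nonneg _)]
      _ ≤ ∑ k, (∑ m, x j m ^ 2) * (∑ m, Z k m ^ 2) :=
          Finset.sum_le_sum fun k _ => Finset.sum_mul_sq_le_sq_mul_sq Finset.univ (x j) (Z k)
      _ = (∑ m, x j m ^ 2) * nZ := by rw [hnZdef, Finset.mul_sum]
      _ ≤ B ^ 2 * nZ := mul_le_mul_of_nonneg_right (hc j) hnZ0
  -- S difference bound
  have hSdiff : ∀ j, |S U j - S V j| ≤ 2 * B ^ 2 * Real.sqrt Γ * D := by
    intro j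
    have ediff : S U j - S V j
        = ∑ i, a i * (∑ m, (U i m - V i m) * x j m) * (∑ m, (U i m + V i m) * x j m) := by
      rw [hSdef]
      simp only
      rw [← Finset.sum_sub_distrib]
      refine Finset.sum_congr rfl fun i _ => ?_
      have h1 : ∑ m, (U i m - V i m) * x j m
          = (∑ m, U i m * x j m) - ∑ m, V i m * x j m := by
        rw [← Finset.sum_sub_distrib]; exact Finset.sum_congr rfl fun m _ => by ring
      have h2 : ∑ m, (U i m + V i m) * x j m
          = (∑ m, U i m * x j m) + ∑ m, V i m * x j m := by
        rw [← Finset.sum_add_distrib]; exact Finset.sum_congr rfl fun m _ => by ring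
      rw [h1, h2]; ring
    have hSP : (∑ i, ∑ m, (U i m + V i m) ^ 2) ≤ 4 * Γ := by
      have h1 : (∑ i, ∑ m, (U i m + V i m) ^ 2)
          ≤ ∑ i, ∑ m, (2 * U i m ^ 2 + 2 * V i m ^ 2) := by
        refine Finset.sum_le_sum fun i _ => Finset.sum_le_sum fun m _ => ?_
        nlinarith [sq_nonneg (U i m - V i m)]
      have h2 : (∑ i, ∑ m, (2 * U i m ^ 2 + 2 * V i m ^ 2))
          = 2 * (∑ i, ∑ m, U i m ^ 2) + 2 * (∑ i, ∑ m, V i m ^ 2) := by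
        simp [Finset.sum_add_distrib, Finset.mul_sum]
      linarith
    -- now bound via hT-style argument, with Z replaced by (U+V)
    set c : ℝ := ∑ m, x j m ^ 2 with hcdef
    calc |S U j - S V j|
        = |∑ i, a i * (∑ m, (U i m - V i m) * x j m) * (∑ m, (U i m + V i m) * x j m)| := by
          rw [ediff]
      _ ≤ ∑ i, |(∑ m, (U i m - V i m) * x j m)| * |(∑ m, (U i m + V i m) * x j m)| := by
          refine le_trans (Finset.abs_sum_le_sum_abs _ _) (le_of_eq ?_)
          refine Finset.sum_congr rfl fun i _ => ?_
          rw [abs_mul, abs_mul, haa i, one_mul]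
      _ ≤ Real.sqrt (∑ i, (∑ m, (U i m - V i m) * x j m) ^ 2)
            * Real.sqrt (∑ i, (∑ m, (U i m + V i m) * x j m) ^ 2) := my_cs_abs _ _ _
      _ ≤ Real.sqrt (c * SD) * Real.sqrt (c * (4 * Γ)) := by
          gcongr Real.sqrt ?_ * Real.sqrt ?_
          · rw [hSDdef, Finset.mul_sum]
            refine Finset.sum_le_sum fun i _ => ?_
            calc (∑ m, (U i m - V i m) * x j m) ^ 2
                ≤ (∑ m, (U i m - V i m) ^ 2) * ∑ m, x j m ^ 2 :=
                  Finset.sum_mul_sq_le_sq_mul_sq Finset.univ _ (x j)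
              _ = c * ∑ m, (U i m - V i m) ^ 2 := by rw [mul_comm]
          · calc (∑ i, (∑ m, (U i m + V i m) * x j m) ^ 2)
                ≤ ∑ i, c * (∑ m, (U i m + V i m) ^ 2) := by
                  refine Finset.sum_le_sum fun i _ => ?_
                  calc (∑ m, (U i m + V i m) * x j m) ^ 2
                      ≤ (∑ m, (U i m + V i m) ^ 2) * ∑ m, x j m ^ 2 :=
                        Finset.sum_mul_sq_le_sq_mul_sq Finset.univ _ (x j)
                    _ = c * ∑ m, (U i m + V i m) ^ 2 := by rw [mul_comm]
              _ = c * ∑ i, ∑ m, (U i m + V i m) ^ 2 := by rw [Finset.mul_sum]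
              _ ≤ c * (4 * Γ) := mul_le_mul_of_nonneg_left hSP (hc0 j)
      _ = (Real.sqrt c * Real.sqrt SD) * (Real.sqrt c * Real.sqrt (4 * Γ)) := by
          rw [Real.sqrt_mul (hc0 j), Real.sqrt_mul (hc0 j)]
      _ = c * (Real.sqrt SD * Real.sqrt (4 * Γ)) := by
          rw [show (Real.sqrt c * Real.sqrt SD) * (Real.sqrt c * Real.sqrt (4 * Γ))
            = (Real.sqrt c * Real.sqrt c) * (Real.sqrt SD * Real.sqrt (4 * Γ)) from by ring,
            Real.mul_self_sqrt (hc0 j)]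
      _ = c * (D * (2 * Real.sqrt Γ)) := by
          rw [show (4:ℝ) * Γ = 2 ^ 2 * Γ from by norm_num,
            Real.sqrt_mul (by positivity), Real.sqrt_sq (by norm_num : (0:ℝ) ≤ 2), hDdef]
      _ ≤ B ^ 2 * (D * (2 * Real.sqrt Γ)) :=
          mul_le_mul_of_nonneg_right (hc j) (by positivity)
      _ = 2 * B ^ 2 * Real.sqrt Γ * D := by ring
  -- T difference
  have hTdiff : ∀ j, |T U j - T V j| ≤ B ^ 2 * D * Real.sqrt nZ := by
    intro j
    have ediff : T U j - T V j
        = ∑ i, a i * (∑ m, (U i m - V i m) * x j m) * (∑ m, x j m * Z i m) := by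
      rw [hTdef]
      simp only
      rw [← Finset.sum_sub_distrib]
      refine Finset.sum_congr rfl fun i _ => ?_
      have h1 : ∑ m, (U i m - V i m) * x j m
          = (∑ m, U i m * x j m) - ∑ m, V i m * x j m := by
        rw [← Finset.sum_sub_distrib]; exact Finset.sum_congr rfl fun m _ => by ring
      rw [h1]; ring
    rw [ediff]
    have := hT (fun i m => U i m - V i m) j
    simpa [hSDdef, hDdef] using this
  -- T individual bounds
  have hTU : ∀ j, |T U j| ≤ B ^ 2 * Real.sqrt Γ * Real.sqrt nZ := by
    intro j
    refine le_trans (hT U j) ?_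
    exact mul_le_mul_of_nonneg_right
      (mul_le_mul_of_nonneg_left hUs (by positivity)) (Real.sqrt_nonneg _)
  have hTV : ∀ j, |T V j| ≤ B ^ 2 * Real.sqrt Γ * Real.sqrt nZ := by
    intro j
    refine le_trans (hT V j) ?_
    exact mul_le_mul_of_nonneg_right
      (mul_le_mul_of_nonneg_left hVs (by positivity)) (Real.sqrt_nonneg _)
  -- per-j bound on G
  have hG : ∀ j, |(S U j - S V j) * P j + 2 * ((T U j) ^ 2 - (T V j) ^ 2)|
      ≤ 6 * B ^ 4 * Real.sqrt Γ * D * nZ := by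
    intro j
    have h1 : |(S U j - S V j) * P j| ≤ 2 * B ^ 4 * Real.sqrt Γ * D * nZ := by
      rw [abs_mul]
      calc |S U j - S V j| * |P j|
          ≤ (2 * B ^ 2 * Real.sqrt Γ * D) * (B ^ 2 * nZ) := by
            apply mul_le_mul (hSdiff j) (hP j) (abs_nonneg _) (by positivity)
        _ = 2 * B ^ 4 * Real.sqrt Γ * D * nZ := by ring
    have h2 : |(T U j) ^ 2 - (T V j) ^ 2| ≤ 2 * B ^ 4 * Real.sqrt Γ * D * nZ := by
      have e : (T U j) ^ 2 - (T V j) ^ 2 = (T U j - T V j) * (T U j + T V j) := by ring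
      rw [e, abs_mul]
      have h3 : |T U j + T V j| ≤ 2 * (B ^ 2 * Real.sqrt Γ * Real.sqrt nZ) := by
        calc |T U j + T V j| ≤ |T U j| + |T V j| := abs_add_le _ _
          _ ≤ 2 * (B ^ 2 * Real.sqrt Γ * Real.sqrt nZ) := by
              have := hTU j; have := hTV j; linarith
      calc |T U j - T V j| * |T U j + T V j|
          ≤ (B ^ 2 * D * Real.sqrt nZ) * (2 * (B ^ 2 * Real.sqrt Γ * Real.sqrt nZ)) := by
            apply mul_le_mul (hTdiff j) h3 (abs_nonneg _) (by positivity)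
        _ = 2 * B ^ 4 * Real.sqrt Γ * D * (Real.sqrt nZ * Real.sqrt nZ) := by ring
        _ = 2 * B ^ 4 * Real.sqrt Γ * D * nZ := by rw [Real.mul_self_sqrt hnZ0]
    calc |(S U j - S V j) * P j + 2 * ((T U j) ^ 2 - (T V j) ^ 2)|
        ≤ |(S U j - S V j) * P j| + |2 * ((T U j) ^ 2 - (T V j) ^ 2)| := abs_add_le _ _
      _ = |(S U j - S V j) * P j| + 2 * |(T U j) ^ 2 - (T V j) ^ 2| := by
          rw [abs_mul (2:ℝ), abs_two]
      _ ≤ 6 * B ^ 4 * Real.sqrt Γ * D * nZ := by linarith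
  -- assemble
  rw [key, abs_mul]
  have hn' : (0:ℝ) < (n:ℝ) := Nat.cast_pos.mpr hn
  have habs : |1 / (n:ℝ)| = 1 / (n:ℝ) := abs_of_pos (by positivity)
  rw [habs]
  calc (1 / (n:ℝ)) * |∑ j, ((S U j - S V j) * P j + 2 * ((T U j) ^ 2 - (T V j) ^ 2))|
      ≤ (1 / (n:ℝ)) * ∑ j, |(S U j - S V j) * P j + 2 * ((T U j) ^ 2 - (T V j) ^ 2)| := by
        apply mul_le_mul_of_nonneg_left (Finset.abs_sum_le_sum_abs _ _) (by positivity)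
    _ ≤ (1 / (n:ℝ)) * ∑ _j : Fin n, (6 * B ^ 4 * Real.sqrt Γ * D * nZ) := by
        apply mul_le_mul_of_nonneg_left (Finset.sum_le_sum fun j _ => hG j) (by positivity)
    _ = (1 / (n:ℝ)) * ((n:ℝ) * (6 * B ^ 4 * Real.sqrt Γ * D * nZ)) := by
        rw [Finset.sum_const, Finset.card_univ, Fintype.card_fin, nsmul_eq_mul]
    _ = 6 * B ^ 4 * Real.sqrt Γ * D * nZ := by field_simp
end
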